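/- Let n ∈ ℕ and let N ⊴ ℤ₂^{*n} be an sS_n-invariant normal subgroup. Define sS_∞(N) := {φ(x) : x ∈ N, φ ∈ sS_∞} and let N_∞ be the normal closure of sS_∞(N) in ℤ₂^{*∞}. Then C := {p ∈ P : p is a rotation of ker(i) for some k ∈ ℕ and some i with a_i ∈ N_∞} is a group-theoretical category of partitions with F_∞(C) = N_∞ and F_n(C) := F_∞(C) ∩ ℤ₂^{*n} = N. -/

import Mathlib

attribute [local instance] Classical.propDecidable

noncomputable section

namespace GTQG

/-! ## Partitions -/

/-- The set `P(k,l)` of partitions of `{1,…,k,1',…,l'}`, encoded as equivalence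
relations (i.e. set partitions) on the disjoint union `Fin k ⊕ Fin l`. -/
abbrev Part (k l : ℕ) : Type := Setoid (Fin k ⊕ Fin l)

/-- `ker(i,j)`: the partition whose blocks are the fibers of the labelling
`x ↦ i x` on upper points and `y ↦ j y` on lower points. -/
def kerPartA {α : Type*} {k l : ℕ} (i : Fin k → α) (j : Fin l → α) : Part k l :=
  Setoid.ker (Sum.elim i j)

/-- `ker(i,j)` for `ℕ`-valued multi-indices. -/
abbrev kerPart {k l : ℕ} (i : Fin k → ℕ) (j : Fin l → ℕ) : Part k l := kerPartA i j

/-- `ker(i) = ker(i,∅) ∈ P(k,0)`. -/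
def kerPart0 {k : ℕ} (i : Fin k → ℕ) : Part k 0 := kerPartA i Fin.elim0

/-- The pair partition `⊔ ∈ P(0,2)`. -/
def pairPart : Part 0 2 := kerPartA Fin.elim0 (fun _ => (1 : ℕ))

/-- The identity partition `| ∈ P(1,1)`. -/
def idPart : Part 1 1 := kerPartA (fun _ => (1 : ℕ)) (fun _ => (1 : ℕ))

/-- The partition `p̂ = ker((1,1,2),(2,1,1)) ∈ P(3,3)`. -/
def pHat : Part 3 3 := kerPart ![1, 1, 2] ![2, 1, 1]

/-- The involution `p* ∈ P(l,k)`, turning `p` upside-down. -/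
def invol {k l : ℕ} (p : Part k l) : Part l k := Setoid.comap Sum.swap p

/-- The number of blocks of a partition. -/
def blockCount {k l : ℕ} (p : Part k l) : ℕ := Nat.card (Quotient p)

/-- The restriction of `p` to its upper row. -/
def upperSetoid {k l : ℕ} (p : Part k l) : Setoid (Fin k) := Setoid.comap Sum.inl p

/-- The restriction of `p` to its lower row. -/
def lowerSetoid {k l : ℕ} (p : Part k l) : Setoid (Fin l) := Setoid.comap Sum.inr p

/-- `p ∈ P(k,l)` and `q ∈ P(l,l')` are compatible if the lower row of `p`
and the upper row of `q` have the same block structure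
(i.e. `j^(p) ∈ S_∞(i^(q))`). -/
def Compatible {k l l' : ℕ} (p : Part k l) (q : Part l l') : Prop :=
  lowerSetoid p = upperSetoid q

section Comp

variable {k l l' : ℕ}

/-- The points of the vertical concatenation of `p ∈ P(k,l)` and `q ∈ P(l,l')`:
`k` upper points, `l` middle points, `l'` lower points. -/
abbrev CompCarrier (k l l' : ℕ) : Type := Fin k ⊕ (Fin l ⊕ Fin l')

/-- Inclusion of the points of `p` into the vertical concatenation. -/
def topIncl : Fin k ⊕ Fin l → CompCarrier k l l' := Sum.map id Sum.inl

/-- Inclusion of the points of `q` into the vertical concatenation. -/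
def botIncl : Fin l ⊕ Fin l' → CompCarrier k l l' := Sum.inr

/-- Two points of the vertical concatenation are directly connected if they are
connected by a string of `p` or by a string of `q`. -/
def compRel (p : Part k l) (q : Part l l') :
    CompCarrier k l l' → CompCarrier k l l' → Prop := fun x y =>
  (∃ u v, p u v ∧ x = topIncl u ∧ y = topIncl v) ∨
  (∃ u v, q u v ∧ x = botIncl u ∧ y = botIncl v)

/-- The partition of all points of the vertical concatenation of `p` and `q`
into connected components. -/
def middleJoin (p : Part k l) (q : Part l l') : Setoid (CompCarrier k l l') :=
  Relation.EqvGen.setoid (compRel p q)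

/-- The composition `qp ∈ P(k,l')`: vertical concatenation with all loops removed. -/
def compPart (p : Part k l) (q : Part l l') : Part k l' :=
  Setoid.comap (Sum.map id Sum.inr) (middleJoin p q)

/-- A point of the vertical concatenation is a middle point. -/
def IsMiddle (x : CompCarrier k l l') : Prop := ∃ m : Fin l, x = Sum.inr (Sum.inl m)

/-- The number `l(q,p)` of loops in the vertical concatenation of `p` and `q`:
connected components consisting entirely of middle points. -/
def loopCount (p : Part k l) (q : Part l l') : ℕ :=
  Nat.card {c : Quotient (middleJoin p q) //
    ∀ x : CompCarrier k l l', Quotient.mk (middleJoin p q) x = c → IsMiddle x}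

end Comp

/-- The direct sum of two set partitions. -/
def sumSetoid {α β : Type*} (p : Setoid α) (q : Setoid β) : Setoid (α ⊕ β) :=
  Setoid.ker (Sum.map (Quotient.mk p) (Quotient.mk q))

/-- The tensor product `p ⊗ q ∈ P(k+k',l+l')`: horizontal concatenation. -/
def tensorPart {k l k' l' : ℕ} (p : Part k l) (q : Part k' l') : Part (k + k') (l + l') :=
  Setoid.comap
    (Sum.elim
      (fun z => Fin.addCases (fun a => Sum.inl (Sum.inl a)) (fun b => Sum.inr (Sum.inl b)) z)
      (fun z => Fin.addCases (fun a => Sum.inl (Sum.inr a)) (fun b => Sum.inr (Sum.inr b)) z))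
    (sumSetoid p q)

/-! ## Rotations -/

/-- Rotating the outermost left upper leg to the lower row (reindexing map). -/
def rotULDmap (k l : ℕ) : Fin k ⊕ Fin (l + 1) → Fin (k + 1) ⊕ Fin l
  | .inl x => .inl x.succ
  | .inr y => Fin.cases (Sum.inl 0) (fun i => Sum.inr i) y

/-- Rotating the outermost left upper leg to the lower row. -/
def rotULD {k l : ℕ} (p : Part (k + 1) l) : Part k (l + 1) :=
  Setoid.comap (rotULDmap k l) p

/-- Rotating the outermost left lower leg to the upper row (reindexing map). -/
def rotDLUmap (k l : ℕ) : Fin (k + 1) ⊕ Fin l → Fin k ⊕ Fin (l + 1)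
  | .inl x => Fin.cases (Sum.inr 0) (fun i => Sum.inl i) x
  | .inr y => .inr y.succ

/-- Rotating the outermost left lower leg to the upper row. -/
def rotDLU {k l : ℕ} (p : Part k (l + 1)) : Part (k + 1) l :=
  Setoid.comap (rotDLUmap k l) p

/-- Rotating the outermost right upper leg to the lower row (reindexing map). -/
def rotURDmap (k l : ℕ) : Fin k ⊕ Fin (l + 1) → Fin (k + 1) ⊕ Fin l
  | .inl x => .inl x.castSucc
  | .inr y => Fin.lastCases (Sum.inl (Fin.last k)) (fun i => Sum.inr i) y

/-- Rotating the outermost right upper leg to the lower row. -/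
def rotURD {k l : ℕ} (p : Part (k + 1) l) : Part k (l + 1) :=
  Setoid.comap (rotURDmap k l) p

/-- Rotating the outermost right lower leg to the upper row (reindexing map). -/
def rotDRUmap (k l : ℕ) : Fin (k + 1) ⊕ Fin l → Fin k ⊕ Fin (l + 1)
  | .inl x => Fin.lastCases (Sum.inr (Fin.last l)) (fun i => Sum.inl i) x
  | .inr y => .inr y.castSucc

/-- Rotating the outermost right lower leg to the upper row. -/
def rotDRU {k l : ℕ} (p : Part k (l + 1)) : Part (k + 1) l :=
  Setoid.comap (rotDRUmap k l) p

/-- One basic rotation step between partitions (with varying numbers of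
upper and lower points). -/
inductive BasicRot : (Σ k l : ℕ, Part k l) → (Σ k l : ℕ, Part k l) → Prop
  | uld {k l : ℕ} (p : Part (k + 1) l) : BasicRot ⟨k + 1, l, p⟩ ⟨k, l + 1, rotULD p⟩
  | dlu {k l : ℕ} (p : Part k (l + 1)) : BasicRot ⟨k, l + 1, p⟩ ⟨k + 1, l, rotDLU p⟩
  | urd {k l : ℕ} (p : Part (k + 1) l) : BasicRot ⟨k + 1, l, p⟩ ⟨k, l + 1, rotURD p⟩
  | dru {k l : ℕ} (p : Part k (l + 1)) : BasicRot ⟨k, l + 1, p⟩ ⟨k + 1, l, rotDRU p⟩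

/-- `IsRotationOf q p`: `q` is obtained from `p` by finitely many basic rotations. -/
def IsRotationOf (q p : Σ k l : ℕ, Part k l) : Prop := Relation.ReflTransGen BasicRot p q

/-- A family `R ⊆ P` is closed under rotation. -/
def RotationClosed (R : ∀ k l : ℕ, Set (Part k l)) : Prop :=
  ∀ {k l k' l' : ℕ} (p : Part k l) (q : Part k' l'),
    p ∈ R k l → IsRotationOf ⟨k', l', q⟩ ⟨k, l, p⟩ → q ∈ R k' l'

/-! ## (Skew) categories of partitions -/

/-- A skew category of partitions: a collection `R ⊆ P` containing `⊔` and `|`,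
closed under involution, connected tensor products and conditioned composition. -/
structure IsSkewCategory (R : ∀ k l : ℕ, Set (Part k l)) : Prop where
  pair_mem : pairPart ∈ R 0 2
  id_mem : idPart ∈ R 1 1
  invol_mem : ∀ {k l : ℕ} {p : Part k l}, p ∈ R k l → invol p ∈ R l k
  conn_tensor_mem : ∀ {k l k' l' : ℕ} {p : Part k l} {q : Part k' l'}
      (i : Fin k → ℕ) (j : Fin l → ℕ) (f : Fin k' → ℕ) (g : Fin l' → ℕ),
      p ∈ R k l → q ∈ R k' l' → kerPart i j = p → kerPart f g = q →
      kerPart (Fin.append i f) (Fin.append j g) ∈ R (k + k') (l + l')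
  cond_comp_mem : ∀ {k l l' : ℕ} {p : Part k l} {q : Part l l'},
      p ∈ R k l → q ∈ R l l' → Compatible p q → compPart p q ∈ R k l'

/-- A category of partitions: a collection `C ⊆ P` containing `⊔` and `|`,
closed under involution, tensor products and composition. -/
structure IsCategoryOfPartitions (C : ∀ k l : ℕ, Set (Part k l)) : Prop where
  pair_mem : pairPart ∈ C 0 2
  id_mem : idPart ∈ C 1 1
  invol_mem : ∀ {k l : ℕ} {p : Part k l}, p ∈ C k l → invol p ∈ C l k
  tensor_mem : ∀ {k l k' l' : ℕ} {p : Part k l} {q : Part k' l'},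
      p ∈ C k l → q ∈ C k' l' → tensorPart p q ∈ C (k + k') (l + l')
  comp_mem : ∀ {k l l' : ℕ} {p : Part k l} {q : Part l l'},
      p ∈ C k l → q ∈ C l l' → compPart p q ∈ C k l'

/-- The skew category of partitions generated by a family `E`. -/
def skewGenerated (E : ∀ k l : ℕ, Set (Part k l)) : ∀ k l : ℕ, Set (Part k l) :=
  fun k l => { p | ∀ R : ∀ k l : ℕ, Set (Part k l),
    IsSkewCategory R → (∀ k' l' : ℕ, E k' l' ⊆ R k' l') → p ∈ R k l }

/-- The category of partitions generated by a family `E`. -/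
def catGenerated (E : ∀ k l : ℕ, Set (Part k l)) : ∀ k l : ℕ, Set (Part k l) :=
  fun k l => { p | ∀ C : ∀ k l : ℕ, Set (Part k l),
    IsCategoryOfPartitions C → (∀ k' l' : ℕ, E k' l' ⊆ C k' l') → p ∈ C k l }

end GTQG
namespace GTQG

/-! ## The free products `ℤ₂^{*∞}` and `ℤ₂^{*n}` -/

/-- The cyclic group of order two (written multiplicatively). -/
abbrev Z2 : Type := Multiplicative (ZMod 2)

/-- `ℤ₂^{*∞}`, the free product of countably many copies of `ℤ₂`. -/
abbrev FreeZ2 : Type := Monoid.CoprodI (fun _ : ℕ => Z2)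

/-- `ℤ₂^{*n}`, the free product of `n` copies of `ℤ₂`. -/
abbrev FreeZ2n (n : ℕ) : Type := Monoid.CoprodI (fun _ : Fin n => Z2)

/-- The generator `a_i` of `ℤ₂^{*∞}`. -/
def gen (i : ℕ) : FreeZ2 := Monoid.CoprodI.of (i := i) (Multiplicative.ofAdd (1 : ZMod 2))

/-- The generator `a_i` of `ℤ₂^{*n}`. -/
def genn {n : ℕ} (i : Fin n) : FreeZ2n n :=
  Monoid.CoprodI.of (i := i) (Multiplicative.ofAdd (1 : ZMod 2))

/-- The word `a_i = a_{i₁} ⋯ a_{i_k} ∈ ℤ₂^{*∞}` associated to a multi-index. -/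
def aWord {k : ℕ} (i : Fin k → ℕ) : FreeZ2 := (List.ofFn fun x => gen (i x)).prod

/-- The word `a_i = a_{i₁} ⋯ a_{i_k} ∈ ℤ₂^{*n}` associated to a multi-index. -/
def aWordn {n k : ℕ} (i : Fin k → Fin n) : FreeZ2n n := (List.ofFn fun x => genn (i x)).prod

/-- The natural embedding `ℤ₂^{*n} → ℤ₂^{*∞}`. -/
def incl (n : ℕ) : FreeZ2n n →* FreeZ2 :=
  Monoid.CoprodI.lift (fun i => Monoid.CoprodI.of (M := fun _ : ℕ => Z2) (i := (i : ℕ)))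

/-- The endomorphism of `ℤ₂^{*∞}` induced by a map `σ : ℕ → ℕ`, `a_i ↦ a_{σ i}`.
For bijective `σ` this is the action of `S_∞`, in general that of `sS_∞`. -/
def permEndo (σ : ℕ → ℕ) : FreeZ2 →* FreeZ2 :=
  Monoid.CoprodI.lift (fun i => Monoid.CoprodI.of (M := fun _ : ℕ => Z2) (i := σ i))

/-- The endomorphism of `ℤ₂^{*n}` induced by a map `σ : Fin n → Fin n`. -/
def permEndon {n : ℕ} (σ : Fin n → Fin n) : FreeZ2n n →* FreeZ2n n :=
  Monoid.CoprodI.lift (fun i => Monoid.CoprodI.of (M := fun _ : Fin n => Z2) (i := σ i))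

/-- A map `ℕ → ℕ` is finitely supported (moves only finitely many points). -/
def FinitelySupported (σ : ℕ → ℕ) : Prop := {x | σ x ≠ x}.Finite

/-- `F_∞(D) = S_∞({a_{ind(p)} : p ∈ D(k,0)})`, the set of all words `a_i` with
`ker(i) ∈ D(k,0)` (the `S_∞`-orbit of the words of minimal-index labellings). -/
def Finfty (D : ∀ k l : ℕ, Set (Part k l)) : Set FreeZ2 :=
  { g | ∃ (k : ℕ) (i : Fin k → ℕ), kerPart0 i ∈ D k 0 ∧ g = aWord i }

end GTQG
namespace GTQG

/-! ## The maps `T̂_p` and `T_p` -/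

/-- `(ℂ^n)^{⊗k}`, realised as functions on multi-indices (the standard basis
`e_{i₁} ⊗ ⋯ ⊗ e_{i_k}` is indexed by multi-indices `i ∈ {1,…,n}^k`). -/
abbrev MV (n k : ℕ) : Type := (Fin k → Fin n) → ℂ

/-- `δ̂_p(i,j) = 1` iff `(i,j) ∈ S_∞(ind(p))`, i.e. iff `ker(i,j) = p`. -/
def hatDelta {k l : ℕ} (p : Part k l) {n : ℕ} (i : Fin k → Fin n) (j : Fin l → Fin n) : ℂ :=
  if kerPartA i j = p then 1 else 0

/-- `δ_p(i,j) = 1` iff `(i,j) ∈ sS_∞(ind(p))`, i.e. iff the labelling `(i,j)`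
is constant on the blocks of `p`. -/
def softDelta {k l : ℕ} (p : Part k l) {n : ℕ} (i : Fin k → Fin n) (j : Fin l → Fin n) : ℂ :=
  if p ≤ kerPartA i j then 1 else 0

/-- The linear map `T̂_p^(n) : (ℂ^n)^{⊗k} → (ℂ^n)^{⊗l}`. -/
def hatT (n : ℕ) {k l : ℕ} (p : Part k l) : MV n k →ₗ[ℂ] MV n l :=
  Matrix.mulVecLin (Matrix.of fun (j : Fin l → Fin n) (i : Fin k → Fin n) => hatDelta p i j)

/-- The linear map `T_p^(n) : (ℂ^n)^{⊗k} → (ℂ^n)^{⊗l}` of Banica–Speicher. -/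
def softT (n : ℕ) {k l : ℕ} (p : Part k l) : MV n k →ₗ[ℂ] MV n l :=
  Matrix.mulVecLin (Matrix.of fun (j : Fin l → Fin n) (i : Fin k → Fin n) => softDelta p i j)

/-- The tensor product of linear maps, under the identification
`(ℂ^n)^{⊗k} ⊗ (ℂ^n)^{⊗k'} ≅ (ℂ^n)^{⊗(k+k')}` of basis vectors
`(e_{i} ⊗ e_{f} ↦ e_{if}`, concatenation of multi-indices). -/
def tensorMap {n k l k' l' : ℕ} (S : MV n k →ₗ[ℂ] MV n l) (T : MV n k' →ₗ[ℂ] MV n l') :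
    MV n (k + k') →ₗ[ℂ] MV n (l + l') :=
  Matrix.mulVecLin (Matrix.of fun (x : Fin (l + l') → Fin n) (y : Fin (k + k') → Fin n) =>
    LinearMap.toMatrix' S (fun a => x (Fin.castAdd l' a)) (fun a => y (Fin.castAdd k' a)) *
    LinearMap.toMatrix' T (fun b => x (Fin.natAdd l b)) (fun b => y (Fin.natAdd k b)))

/-- The adjoint of a linear map `(ℂ^n)^{⊗k} → (ℂ^n)^{⊗l}` with respect to the
standard Hermitian inner products (conjugate-transpose of the matrix in the
standard bases). -/
def adjointMap {n k l : ℕ} (S : MV n k →ₗ[ℂ] MV n l) : MV n l →ₗ[ℂ] MV n k :=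
  Matrix.mulVecLin (LinearMap.toMatrix' S).conjTranspose

/-- The map `ζ : ℂ → (ℂ^n)^{⊗2}`, `1 ↦ Σᵢ eᵢ ⊗ eᵢ`. -/
def zetaMap (n : ℕ) : MV n 0 →ₗ[ℂ] MV n 2 :=
  Matrix.mulVecLin (Matrix.of fun (j : Fin 2 → Fin n) (_ : Fin 0 → Fin n) =>
    if j 0 = j 1 then (1 : ℂ) else 0)

/-- A tensor category with duals (of subspaces of `Hom((ℂ^n)^{⊗k}, (ℂ^n)^{⊗l})`). -/
structure IsTensorCategoryWithDuals (n : ℕ)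
    (H : ∀ k l : ℕ, Submodule ℂ (MV n k →ₗ[ℂ] MV n l)) : Prop where
  tensor_mem : ∀ {k l k' l' : ℕ} (S : MV n k →ₗ[ℂ] MV n l) (T : MV n k' →ₗ[ℂ] MV n l'),
      S ∈ H k l → T ∈ H k' l' → tensorMap S T ∈ H (k + k') (l + l')
  comp_mem : ∀ {k l l' : ℕ} (S : MV n k →ₗ[ℂ] MV n l) (T : MV n l →ₗ[ℂ] MV n l'),
      S ∈ H k l → T ∈ H l l' → T ∘ₗ S ∈ H k l'
  adjoint_mem : ∀ {k l : ℕ} (S : MV n k →ₗ[ℂ] MV n l), S ∈ H k l → adjointMap S ∈ H l k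
  id_mem : LinearMap.id ∈ H 1 1
  zeta_mem : zetaMap n ∈ H 0 2

/-- The collection of subspaces `span{T̂_p^(n) : p ∈ R(k,l)}`. -/
def spanOf (n : ℕ) (R : ∀ k l : ℕ, Set (Part k l)) :
    ∀ k l : ℕ, Submodule ℂ (MV n k →ₗ[ℂ] MV n l) :=
  fun k l => Submodule.span ℂ {T | ∃ p ∈ R k l, T = hatT n p}

/-- All connected tensor products of `p` and `q`. -/
def connTensorSet {k l k' l' : ℕ} (p : Part k l) (q : Part k' l') :
    Set (Part (k + k') (l + l')) :=
  { r | ∃ (i : Fin k → ℕ) (j : Fin l → ℕ) (f : Fin k' → ℕ) (g : Fin l' → ℕ),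
      kerPart i j = p ∧ kerPart f g = q ∧ r = kerPart (Fin.append i f) (Fin.append j g) }

/-- All connected conditioned compositions of `p` and `q`. -/
def connCompSet {k l l' : ℕ} (p : Part k l) (q : Part l l') : Set (Part k l') :=
  { r | ∃ (i : Fin k → ℕ) (h : Fin l → ℕ) (g : Fin l' → ℕ),
      kerPart i h = p ∧ kerPart h g = q ∧ r = kerPart i g }

end GTQG
namespace GTQG

/-- `N_∞`, the normal closure in `ℤ₂^{*∞}` of `sS_∞(N) = {φ(x) : x ∈ N, φ ∈ sS_∞}`. -/
def NinftyEndo (n : ℕ) (N : Subgroup (FreeZ2n n)) : Subgroup FreeZ2 :=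
  Subgroup.normalClosure
    { y | ∃ φ : ℕ → ℕ, FinitelySupported φ ∧ ∃ g ∈ N, y = permEndo φ (incl n g) }

/-- The set `C` of all partitions that are rotations of some `ker(i)` with
`a_i ∈ N_∞`. -/
def rotSetOfGrp (NN : Subgroup FreeZ2) : ∀ k l : ℕ, Set (Part k l) := fun k l =>
  { p | ∃ (k' : ℕ) (i : Fin k' → ℕ), aWord i ∈ NN ∧
      IsRotationOf ⟨k, l, p⟩ ⟨k', 0, kerPart0 i⟩ }

/-!
Label the points of `p ∈ P(k,l)` by `h : Fin k ⊕ Fin l → ℕ` with `ker h = p` and attach to `h`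
the word `a_f a_g⁻¹`, where `f` and `g` are the upper and lower labels. Every `a_i` is an
involution, so this is the word read once around the partition (upper row from left to right,
lower row from right to left), and moving a leg between the rows conjugates it by a generator or
leaves it unchanged. Hence, for normal `N_∞`, the set `C` consists exactly of the partitions
admitting a labelling with word in `N_∞`, and by `sS_∞`-invariance every labelling coarser than
`p` then has its word in `N_∞`. Restricting one labelling of `p ⊗ q`, resp. of the vertical
concatenation of `p` and `q`, to the pieces gives the tensor and composition axioms: the word of
`p ⊗ q` is a product of conjugates of the words of `p` and `q`, and in a composition the middle
row cancels. Finally `N_∞ ∩ ℤ₂^{*n} = N` since a retraction `ℤ₂^{*∞} → ℤ₂^{*n}` folding the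
generators onto `a_1, …, a_n` maps `N_∞` into `N`.
-/

theorem Setoid.ker_comp {α β γ : Type*} (g : β → γ) (f : α → β) :
    Setoid.ker (g ∘ f) = Setoid.comap f (Setoid.ker g) :=
  rfl

theorem Setoid.exists_ker_eq {α : Type*} [Countable α] (s : Setoid α) :
    ∃ h : α → ℕ, Setoid.ker h = s := by
  obtain ⟨ι, hι⟩ := Countable.exists_injective_nat (Quotient s)
  refine ⟨ι ∘ Quotient.mk s, Setoid.ext fun a b => ?_⟩
  exact hι.eq_iff.trans Quotient.eq

theorem FinitelySupported.id : FinitelySupported id := by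
  simp [FinitelySupported]

theorem FinitelySupported.comp {φ ψ : ℕ → ℕ} (hφ : FinitelySupported φ)
    (hψ : FinitelySupported ψ) : FinitelySupported (φ ∘ ψ) := by
  refine (hφ.union hψ).subset fun x hx => ?_
  by_contra hc
  simp only [Set.mem_union, Set.mem_ofPred_eq, not_or, not_not] at hc
  exact hx (by simp [hc.1, hc.2])

theorem exists_finitelySupported_comp_eq {α : Type*} [Finite α] {h₀ h : α → ℕ}
    (hle : Setoid.ker h₀ ≤ Setoid.ker h) : ∃ φ : ℕ → ℕ, FinitelySupported φ ∧ φ ∘ h₀ = h := by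
  classical
  refine ⟨fun x => if hx : ∃ z, h₀ z = x then h hx.choose else x, ?_, funext fun z => ?_⟩
  · refine (Set.finite_range h₀).subset fun x hx => ?_
    by_contra hc
    exact hx (dif_neg hc)
  · have hz : ∃ z', h₀ z' = h₀ z := ⟨z, rfl⟩
    simp only [Function.comp_apply, dif_pos hz]
    exact hle hz.choose_spec

theorem kerPart0_comp_inl {k : ℕ} (h : Fin k ⊕ Fin 0 → ℕ) :
    kerPart0 (h ∘ Sum.inl) = Setoid.ker h := by
  rw [kerPart0, kerPartA]
  congr 1
  ext (x | x)
  · rfl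
  · exact x.elim0

theorem gen_mul_self (i : ℕ) : gen i * gen i = 1 := by
  rw [gen, ← map_mul]
  exact map_one _

theorem gen_inv (i : ℕ) : (gen i)⁻¹ = gen i :=
  inv_eq_of_mul_eq_one_right (gen_mul_self i)

theorem gen_mul_gen_mul (i : ℕ) (x : FreeZ2) : gen i * (gen i * x) = x := by
  rw [← mul_assoc, gen_mul_self, one_mul]

theorem aWord_zero (i : Fin 0 → ℕ) : aWord i = 1 := by
  simp [aWord]

theorem aWord_succ {k : ℕ} (f : Fin (k + 1) → ℕ) :
    aWord f = gen (f 0) * aWord (fun x => f x.succ) := by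
  simp [aWord, List.ofFn_succ]

theorem aWord_castSucc {k : ℕ} (f : Fin (k + 1) → ℕ) :
    aWord f = aWord (fun x => f x.castSucc) * gen (f (Fin.last k)) := by
  rw [aWord, List.ofFn_succ', List.concat_eq_append, List.prod_append]
  simp [aWord]

theorem aWord_add {k k' : ℕ} (f : Fin (k + k') → ℕ) :
    aWord f = aWord (fun x => f (Fin.castAdd k' x)) * aWord (fun x => f (Fin.natAdd k x)) := by
  rw [aWord, List.ofFn_add, List.prod_append]
  rfl

theorem exists_aWord_eq (x : FreeZ2) : ∃ (k : ℕ) (i : Fin k → ℕ), aWord i = x := by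
  induction x using Monoid.CoprodI.induction_on with
  | one => exact ⟨0, Fin.elim0, aWord_zero _⟩
  | of i m =>
    obtain rfl | rfl : m = 1 ∨ m = Multiplicative.ofAdd (1 : ZMod 2) := by revert m; decide
    · exact ⟨0, Fin.elim0, by rw [aWord_zero, map_one]⟩
    · exact ⟨1, fun _ => i, by rw [aWord_succ, aWord_zero, mul_one]; rfl⟩
  | mul x y hx hy =>
    obtain ⟨k, i, rfl⟩ := hx
    obtain ⟨k', j, rfl⟩ := hy
    exact ⟨k + k', Fin.append i j, by simp [aWord_add (Fin.append i j)]⟩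

theorem permEndo_aWord (φ : ℕ → ℕ) {k : ℕ} (i : Fin k → ℕ) :
    permEndo φ (aWord i) = aWord (φ ∘ i) := by
  rw [aWord, map_list_prod, List.map_ofFn]
  simp [aWord, Function.comp_def, permEndo, gen]

theorem permEndo_comp (φ ψ : ℕ → ℕ) : (permEndo φ).comp (permEndo ψ) = permEndo (φ ∘ ψ) :=
  Monoid.CoprodI.ext_hom _ _ fun i => by ext; simp [permEndo]

theorem permEndo_id : permEndo id = MonoidHom.id FreeZ2 :=
  Monoid.CoprodI.ext_hom _ _ fun i => by ext; simp [permEndo]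

theorem rotURD_rotDRU {k l : ℕ} (p : Part k (l + 1)) : rotURD (rotDRU p) = p := by
  have h : ∀ x, rotDRUmap k l (rotURDmap k l x) = x := by
    rintro (x | y)
    · simp [rotURDmap, rotDRUmap]
    · refine Fin.lastCases ?_ ?_ y <;> simp [rotURDmap, rotDRUmap]
  ext a b
  show p (rotDRUmap k l (rotURDmap k l a)) (rotDRUmap k l (rotURDmap k l b)) ↔ p a b
  rw [h, h]

def labelWord {k l : ℕ} (h : Fin k ⊕ Fin l → ℕ) : FreeZ2 :=
  aWord (h ∘ Sum.inl) * (aWord (h ∘ Sum.inr))⁻¹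

theorem labelWord_comp_swap {k l : ℕ} (h : Fin k ⊕ Fin l → ℕ) :
    labelWord (h ∘ Sum.swap) = (labelWord h)⁻¹ := by
  simp only [labelWord, mul_inv_rev, inv_inv]
  rfl

theorem labelWord_comp_rotULDmap {k l : ℕ} (h : Fin (k + 1) ⊕ Fin l → ℕ) :
    labelWord (h ∘ rotULDmap k l) = gen (h (.inl 0)) * labelWord h * gen (h (.inl 0)) := by
  rw [labelWord, labelWord, aWord_succ (h ∘ Sum.inl), aWord_succ ((h ∘ rotULDmap k l) ∘ Sum.inr)]
  simp only [Function.comp_apply, rotULDmap, Fin.cases_zero, Fin.cases_succ]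
  simp only [mul_inv_rev, gen_inv, mul_assoc, gen_mul_gen_mul]
  rfl

theorem labelWord_comp_rotDLUmap {k l : ℕ} (h : Fin k ⊕ Fin (l + 1) → ℕ) :
    labelWord (h ∘ rotDLUmap k l) = gen (h (.inr 0)) * labelWord h * gen (h (.inr 0)) := by
  rw [labelWord, labelWord, aWord_succ (h ∘ Sum.inr), aWord_succ ((h ∘ rotDLUmap k l) ∘ Sum.inl)]
  simp only [Function.comp_apply, rotDLUmap, Fin.cases_zero, Fin.cases_succ]
  simp only [mul_inv_rev, gen_inv, mul_assoc, gen_mul_self, mul_one]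
  rfl

theorem labelWord_comp_rotURDmap {k l : ℕ} (h : Fin (k + 1) ⊕ Fin l → ℕ) :
    labelWord (h ∘ rotURDmap k l) = labelWord h := by
  rw [labelWord, labelWord, aWord_castSucc (h ∘ Sum.inl),
    aWord_castSucc ((h ∘ rotURDmap k l) ∘ Sum.inr)]
  simp only [Function.comp_apply, rotURDmap, Fin.lastCases_last, Fin.lastCases_castSucc]
  simp only [mul_inv_rev, gen_inv, mul_assoc]
  rfl

theorem labelWord_comp_rotDRUmap {k l : ℕ} (h : Fin k ⊕ Fin (l + 1) → ℕ) :
    labelWord (h ∘ rotDRUmap k l) = labelWord h := by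
  rw [labelWord, labelWord, aWord_castSucc (h ∘ Sum.inr),
    aWord_castSucc ((h ∘ rotDRUmap k l) ∘ Sum.inl)]
  simp only [Function.comp_apply, rotDRUmap, Fin.lastCases_last, Fin.lastCases_castSucc]
  simp only [mul_inv_rev, gen_inv, mul_assoc]
  rfl

def IsSSInftyInvariant (NN : Subgroup FreeZ2) : Prop :=
  ∀ φ : ℕ → ℕ, FinitelySupported φ → ∀ x ∈ NN, permEndo φ x ∈ NN

def HasLabellingIn (NN : Subgroup FreeZ2) (x : Σ k l : ℕ, Part k l) : Prop :=
  ∃ h : Fin x.1 ⊕ Fin x.2.1 → ℕ, Setoid.ker h = x.2.2 ∧ labelWord h ∈ NN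

section Labelling

variable {NN : Subgroup FreeZ2}

theorem conj_gen_mem [NN.Normal] {w : FreeZ2} (hw : w ∈ NN) (i : ℕ) :
    gen i * w * gen i ∈ NN := by
  simpa only [gen_inv] using Subgroup.Normal.conj_mem ‹_› w hw (gen i)

theorem HasLabellingIn.of_basicRot [NN.Normal] {x y : Σ k l : ℕ, Part k l}
    (hxy : BasicRot x y) (hx : HasLabellingIn NN x) : HasLabellingIn NN y := by
  obtain ⟨h, hker, hw⟩ := hx
  cases hxy with
  | uld p =>
    refine ⟨h ∘ rotULDmap _ _, by rw [Setoid.ker_comp, hker]; rfl, ?_⟩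
    rw [labelWord_comp_rotULDmap]
    exact conj_gen_mem hw _
  | dlu p =>
    refine ⟨h ∘ rotDLUmap _ _, by rw [Setoid.ker_comp, hker]; rfl, ?_⟩
    rw [labelWord_comp_rotDLUmap]
    exact conj_gen_mem hw _
  | urd p =>
    exact ⟨h ∘ rotURDmap _ _, by rw [Setoid.ker_comp, hker]; rfl,
      (labelWord_comp_rotURDmap h).symm ▸ hw⟩
  | dru p =>
    exact ⟨h ∘ rotDRUmap _ _, by rw [Setoid.ker_comp, hker]; rfl,
      (labelWord_comp_rotDRUmap h).symm ▸ hw⟩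

theorem HasLabellingIn.of_isRotationOf [NN.Normal] {x y : Σ k l : ℕ, Part k l}
    (hxy : IsRotationOf y x) (hx : HasLabellingIn NN x) : HasLabellingIn NN y := by
  induction hxy with
  | refl => exact hx
  | tail _ step ih => exact ih.of_basicRot step

theorem mem_rotSetOfGrp_of_labelWord_mem : ∀ {k l : ℕ} {h : Fin k ⊕ Fin l → ℕ},
    labelWord h ∈ NN → Setoid.ker h ∈ rotSetOfGrp NN k l
  | k, 0, h, hw => ⟨k, h ∘ Sum.inl, by simpa [labelWord, aWord_zero] using hw,
      kerPart0_comp_inl h ▸ Relation.ReflTransGen.refl⟩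
  | k, l + 1, h, hw => by
    obtain ⟨k', i, hi, hrot⟩ := mem_rotSetOfGrp_of_labelWord_mem (h := h ∘ rotDRUmap k l)
      ((labelWord_comp_rotDRUmap h).symm ▸ hw)
    refine ⟨k', i, hi, hrot.tail ?_⟩
    have hstep := BasicRot.urd (rotDRU (Setoid.ker h))
    rwa [rotURD_rotDRU] at hstep

theorem mem_rotSetOfGrp_iff [NN.Normal] {k l : ℕ} {p : Part k l} :
    p ∈ rotSetOfGrp NN k l ↔ ∃ h : Fin k ⊕ Fin l → ℕ, Setoid.ker h = p ∧ labelWord h ∈ NN := by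
  refine ⟨fun ⟨k', i, hi, hrot⟩ => HasLabellingIn.of_isRotationOf hrot ?_, ?_⟩
  · exact ⟨Sum.elim i Fin.elim0, rfl, by simpa [labelWord, aWord_zero] using hi⟩
  · rintro ⟨h, rfl, hw⟩
    exact mem_rotSetOfGrp_of_labelWord_mem hw

theorem labelWord_mem_of_le [NN.Normal] (hNN : IsSSInftyInvariant NN) {k l : ℕ} {p : Part k l}
    (hp : p ∈ rotSetOfGrp NN k l) {h : Fin k ⊕ Fin l → ℕ} (hle : p ≤ Setoid.ker h) :
    labelWord h ∈ NN := by
  obtain ⟨h₀, rfl, hw⟩ := mem_rotSetOfGrp_iff.1 hp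
  obtain ⟨φ, hφ, rfl⟩ := exists_finitelySupported_comp_eq hle
  simpa [labelWord, permEndo_aWord, Function.comp_assoc] using hNN φ hφ _ hw

end Labelling

theorem comap_castAdd_tensorPart {k l k' l' : ℕ} (p : Part k l) (q : Part k' l') :
    Setoid.comap (Sum.map (Fin.castAdd k') (Fin.castAdd l')) (tensorPart p q) = p := by
  ext x y
  change Sum.map (Quotient.mk p) (Quotient.mk q) _ = Sum.map (Quotient.mk p) (Quotient.mk q) _ ↔ _
  rcases x with x | x <;> rcases y with y | y <;> simp [Quotient.eq]

theorem comap_natAdd_tensorPart {k l k' l' : ℕ} (p : Part k l) (q : Part k' l') :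
    Setoid.comap (Sum.map (Fin.natAdd k) (Fin.natAdd l)) (tensorPart p q) = q := by
  ext x y
  change Sum.map (Quotient.mk p) (Quotient.mk q) _ = Sum.map (Quotient.mk p) (Quotient.mk q) _ ↔ _
  rcases x with x | x <;> rcases y with y | y <;> simp [Quotient.eq]

theorem labelWord_tensor {k l k' l' : ℕ} (h : Fin (k + k') ⊕ Fin (l + l') → ℕ) :
    labelWord h = aWord (fun x => h (.inl (Fin.castAdd k' x))) *
      labelWord (h ∘ Sum.map (Fin.natAdd k) (Fin.natAdd l)) *
      (aWord (fun x => h (.inl (Fin.castAdd k' x))))⁻¹ *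
      labelWord (h ∘ Sum.map (Fin.castAdd k') (Fin.castAdd l')) := by
  rw [labelWord, aWord_add (h ∘ Sum.inl), aWord_add (h ∘ Sum.inr)]
  simp only [labelWord, Function.comp_def, Sum.map_inl, Sum.map_inr]
  group

theorem le_comap_topIncl_middleJoin {k l l' : ℕ} (p : Part k l) (q : Part l l') :
    p ≤ Setoid.comap topIncl (middleJoin p q) :=
  fun u v huv => Relation.EqvGen.rel _ _ (Or.inl ⟨u, v, huv, rfl, rfl⟩)

theorem le_comap_botIncl_middleJoin {k l l' : ℕ} (p : Part k l) (q : Part l l') :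
    q ≤ Setoid.comap botIncl (middleJoin p q) :=
  fun u v huv => Relation.EqvGen.rel _ _ (Or.inr ⟨u, v, huv, rfl, rfl⟩)

theorem labelWord_comp {k l l' : ℕ} (h : CompCarrier k l l' → ℕ) :
    labelWord (h ∘ Sum.map id Sum.inr) = labelWord (h ∘ topIncl) * labelWord (h ∘ botIncl) := by
  show aWord (h ∘ Sum.inl) * (aWord (h ∘ Sum.inr ∘ Sum.inr))⁻¹ =
    aWord (h ∘ Sum.inl) * (aWord (h ∘ Sum.inr ∘ Sum.inl))⁻¹ *
      (aWord (h ∘ Sum.inr ∘ Sum.inl) * (aWord (h ∘ Sum.inr ∘ Sum.inr))⁻¹)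
  group

section Category

variable {NN : Subgroup FreeZ2}

theorem pairPart_mem_rotSetOfGrp : pairPart ∈ rotSetOfGrp NN 0 2 :=
  mem_rotSetOfGrp_of_labelWord_mem (by simp [labelWord, aWord_succ, aWord_zero, gen_mul_self])

theorem idPart_mem_rotSetOfGrp : idPart ∈ rotSetOfGrp NN 1 1 :=
  mem_rotSetOfGrp_of_labelWord_mem (by simp [labelWord, Function.comp_def])

theorem pHat_mem_rotSetOfGrp : pHat ∈ rotSetOfGrp NN 3 3 :=
  mem_rotSetOfGrp_of_labelWord_mem
    (by simp [labelWord, aWord_succ, aWord_zero, ← mul_assoc, gen_mul_self])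

variable [NN.Normal]

theorem invol_mem_rotSetOfGrp {k l : ℕ} {p : Part k l} (hp : p ∈ rotSetOfGrp NN k l) :
    invol p ∈ rotSetOfGrp NN l k := by
  obtain ⟨h, rfl, hw⟩ := mem_rotSetOfGrp_iff.1 hp
  exact mem_rotSetOfGrp_iff.2 ⟨h ∘ Sum.swap, rfl, labelWord_comp_swap h ▸ inv_mem hw⟩

variable (hNN : IsSSInftyInvariant NN)
include hNN

theorem tensorPart_mem_rotSetOfGrp {k l k' l' : ℕ} {p : Part k l} {q : Part k' l'}
    (hp : p ∈ rotSetOfGrp NN k l) (hq : q ∈ rotSetOfGrp NN k' l') :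
    tensorPart p q ∈ rotSetOfGrp NN (k + k') (l + l') := by
  obtain ⟨h, hker⟩ := Setoid.exists_ker_eq (tensorPart p q)
  have hwp := labelWord_mem_of_le hNN hp (h := h ∘ Sum.map (Fin.castAdd k') (Fin.castAdd l'))
    (by rw [Setoid.ker_comp, hker, comap_castAdd_tensorPart])
  have hwq := labelWord_mem_of_le hNN hq (h := h ∘ Sum.map (Fin.natAdd k) (Fin.natAdd l))
    (by rw [Setoid.ker_comp, hker, comap_natAdd_tensorPart])
  refine mem_rotSetOfGrp_iff.2 ⟨h, hker, ?_⟩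
  rw [labelWord_tensor]
  exact mul_mem (Subgroup.Normal.conj_mem ‹_› _ hwq _) hwp

theorem compPart_mem_rotSetOfGrp {k l l' : ℕ} {p : Part k l} {q : Part l l'}
    (hp : p ∈ rotSetOfGrp NN k l) (hq : q ∈ rotSetOfGrp NN l l') :
    compPart p q ∈ rotSetOfGrp NN k l' := by
  obtain ⟨h, hker⟩ := Setoid.exists_ker_eq (middleJoin p q)
  have hwp := labelWord_mem_of_le hNN hp (h := h ∘ topIncl)
    (by rw [Setoid.ker_comp, hker]; exact le_comap_topIncl_middleJoin p q)
  have hwq := labelWord_mem_of_le hNN hq (h := h ∘ botIncl)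
    (by rw [Setoid.ker_comp, hker]; exact le_comap_botIncl_middleJoin p q)
  refine mem_rotSetOfGrp_iff.2 ⟨h ∘ Sum.map id Sum.inr, by rw [Setoid.ker_comp, hker]; rfl, ?_⟩
  rw [labelWord_comp]
  exact mul_mem hwp hwq

theorem isCategoryOfPartitions_rotSetOfGrp : IsCategoryOfPartitions (rotSetOfGrp NN) where
  pair_mem := pairPart_mem_rotSetOfGrp
  id_mem := idPart_mem_rotSetOfGrp
  invol_mem := invol_mem_rotSetOfGrp
  tensor_mem := tensorPart_mem_rotSetOfGrp hNN
  comp_mem := compPart_mem_rotSetOfGrp hNN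

theorem finfty_rotSetOfGrp : Finfty (rotSetOfGrp NN) = NN := by
  ext x
  constructor
  · rintro ⟨k, i, hi, rfl⟩
    simpa [labelWord, aWord_zero] using
      labelWord_mem_of_le hNN hi (h := Sum.elim i Fin.elim0) le_rfl
  · intro hx
    obtain ⟨k, i, rfl⟩ := exists_aWord_eq x
    exact ⟨k, i, ⟨k, i, hx, .refl⟩, rfl⟩

end Category

section Ninfty

instance ninftyEndo_normal (n : ℕ) (N : Subgroup (FreeZ2n n)) : (NinftyEndo n N).Normal :=
  Subgroup.normalClosure_normal

theorem isSSInftyInvariant_ninftyEndo (n : ℕ) (N : Subgroup (FreeZ2n n)) :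
    IsSSInftyInvariant (NinftyEndo n N) := fun φ hφ x hx =>
  Subgroup.normalClosure_le_normal (N := (NinftyEndo n N).comap (permEndo φ))
    (by
      rintro _ ⟨ψ, hψ, g, hg, rfl⟩
      rw [SetLike.mem_coe, Subgroup.mem_comap, ← MonoidHom.comp_apply, permEndo_comp]
      exact Subgroup.subset_normalClosure ⟨φ ∘ ψ, hφ.comp hψ, g, hg, rfl⟩)
    hx

variable {n : ℕ} {N : Subgroup (FreeZ2n n)}

def foldHom (r : ℕ → Fin n) : FreeZ2 →* FreeZ2n n :=
  Monoid.CoprodI.lift fun i => Monoid.CoprodI.of (M := fun _ : Fin n => Z2) (i := r i)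

theorem foldHom_comp_incl {r : ℕ → Fin n} (hr : ∀ i : Fin n, r i = i) :
    (foldHom r).comp (incl n) = MonoidHom.id (FreeZ2n n) :=
  Monoid.CoprodI.ext_hom _ _ fun i => by ext; simp [foldHom, incl, hr]

theorem foldHom_comp_permEndo_comp_incl (r : ℕ → Fin n) (φ : ℕ → ℕ) :
    ((foldHom r).comp (permEndo φ)).comp (incl n) = permEndon fun i => r (φ i) :=
  Monoid.CoprodI.ext_hom _ _ fun i => by ext; simp [foldHom, permEndo, permEndon, incl]

theorem ninftyEndo_le_comap_foldHom (hnorm : N.Normal)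
    (hinv : ∀ φ : Fin n → Fin n, ∀ g ∈ N, permEndon φ g ∈ N) (r : ℕ → Fin n) :
    NinftyEndo n N ≤ N.comap (foldHom r) := by
  refine Subgroup.normalClosure_le_normal ?_
  rintro _ ⟨φ, -, g, hg, rfl⟩
  rw [SetLike.mem_coe, Subgroup.mem_comap, ← MonoidHom.comp_apply, ← MonoidHom.comp_apply,
    foldHom_comp_permEndo_comp_incl]
  exact hinv _ g hg

theorem comap_incl_ninftyEndo (hnorm : N.Normal)
    (hinv : ∀ φ : Fin n → Fin n, ∀ g ∈ N, permEndon φ g ∈ N) :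
    (NinftyEndo n N).comap (incl n) = N := by
  refine le_antisymm (fun v hv => ?_) fun v hv => Subgroup.subset_normalClosure
    ⟨id, FinitelySupported.id, v, hv, by rw [permEndo_id, MonoidHom.id_apply]⟩
  rcases n with _ | n
  · clear hv
    induction v using Monoid.CoprodI.induction_on with
    | one => exact N.one_mem
    | of i => exact i.elim0
    | mul x y hx hy => exact N.mul_mem hx hy
  · let r : ℕ → Fin (n + 1) := fun i => if h : i < n + 1 then ⟨i, h⟩ else 0
    have hfold := ninftyEndo_le_comap_foldHom hnorm hinv r hv
    rwa [Subgroup.mem_comap, ← MonoidHom.comp_apply,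
      foldHom_comp_incl fun i => dif_pos i.isLt] at hfold

end Ninfty

theorem rotations_groupTheoreticalCategory_general (n : ℕ)
    (N : Subgroup (FreeZ2n n)) (hnorm : N.Normal)
    (hinv : ∀ φ : Fin n → Fin n, ∀ g ∈ N, permEndon φ g ∈ N) :
    IsCategoryOfPartitions (rotSetOfGrp (NinftyEndo n N)) ∧
    pHat ∈ rotSetOfGrp (NinftyEndo n N) 3 3 ∧
    Finfty (rotSetOfGrp (NinftyEndo n N)) = (NinftyEndo n N : Set FreeZ2) ∧
    Finfty (rotSetOfGrp (NinftyEndo n N)) ∩ Set.range (incl n)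
      = incl n '' (N : Set (FreeZ2n n)) := by
  have hNN := isSSInftyInvariant_ninftyEndo n N
  refine ⟨isCategoryOfPartitions_rotSetOfGrp hNN, pHat_mem_rotSetOfGrp,
    finfty_rotSetOfGrp hNN, ?_⟩
  rw [finfty_rotSetOfGrp hNN, ← Set.image_preimage_eq_inter_range, ← Subgroup.coe_comap,
    comap_incl_ninftyEndo hnorm hinv]

/-- For an `sS_n`-invariant normal subgroup `N ⊴ ℤ₂^{*n}`,
the set `C` of rotations of partitions `ker(i)` with `a_i ∈ N_∞` is a
group-theoretical category of partitions with `F_∞(C) = N_∞` and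
`F_n(C) = F_∞(C) ∩ ℤ₂^{*n} = N`. -/
theorem rotations_groupTheoreticalCategory (n : ℕ) (hn : 0 < n)
    (N : Subgroup (FreeZ2n n)) (hnorm : N.Normal)
    (hinv : ∀ φ : Fin n → Fin n, ∀ g ∈ N, permEndon φ g ∈ N) :
    IsCategoryOfPartitions (rotSetOfGrp (NinftyEndo n N)) ∧
    pHat ∈ rotSetOfGrp (NinftyEndo n N) 3 3 ∧
    Finfty (rotSetOfGrp (NinftyEndo n N)) = (NinftyEndo n N : Set FreeZ2) ∧
    Finfty (rotSetOfGrp (NinftyEndo n N)) ∩ Set.range (incl n)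
      = incl n '' (N : Set (FreeZ2n n)) :=
  rotations_groupTheoreticalCategory_general n N hnorm hinv

end GTQG
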